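/- Let z ∈ ℕ satisfy z + 1 ≥ ⌈a₁/d⌉ and z ≤ a₁ − 2. Then Σ_{j=z+1}^{a₁−1} ε_j·(j·d − a₁) ≥ ((z+1)·d − a₁) · (⌊ω_{a₁−1}/a₁⌋ − ⌊ω_z/a₁⌋ − 1), where the sum is computed in ℤ. -/

import Mathlib

/-!
Let `m = ⌊ω_z / a₁⌋`. Since `ω_{a₁-1} = F + a₁ = (Q + 1)a₁ + (R - 1)`, the right-hand factor of the
left side is `Q - m`. Every block `I_k` with `m ≤ k < Q` contains at least `z + 1` elements of `S`
(the translates `k a₁ + (ω_i mod a₁)`, `i ≤ z`, of the Apéry elements, whose residues are distinct),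
and at most `a₁ - 1`, because `F - (Q - k)a₁ ∈ I_k` is a gap. Hence these `Q - m` blocks are counted
by `ε_{z+1}, …, ε_{a₁-1}`, and each weight `j d - a₁` with `j ≥ z + 1` is at least
`(z + 1)d - a₁ ≥ 0`.
-/

open Finset

lemma add_apply_mem_setOf_sum_mul {d : ℕ} (a : Fin d → ℕ) (i : Fin d) {x : ℕ}
    (hx : x ∈ {m : ℕ | ∃ c : Fin d → ℕ, m = ∑ i, c i * a i}) :
    x + a i ∈ {m : ℕ | ∃ c : Fin d → ℕ, m = ∑ i, c i * a i} := by
  obtain ⟨c, rfl⟩ := hx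
  refine ⟨c + Pi.single i 1, ?_⟩
  simp [add_mul, sum_add_distrib, Pi.single_apply]

section Apery

variable {S : Set ℕ} {n : ℕ}

lemma add_mul_mem (hS : ∀ x ∈ S, x + n ∈ S) {x : ℕ} (hx : x ∈ S) (u : ℕ) : x + u * n ∈ S := by
  induction u with
  | zero => simpa using hx
  | succ u ih => simpa [add_mul, ← add_assoc] using hS _ ih

lemma mod_ne_of_lt_of_forall_add_ne (hS : ∀ x ∈ S, x + n ∈ S) {w w' : ℕ} (hw : w ∈ S)
    (hw' : ¬∃ s ∈ S, s + n = w') (hlt : w < w') : w % n ≠ w' % n := by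
  intro hmod
  obtain ⟨u, hu⟩ := (Nat.modEq_iff_dvd' hlt.le).1 hmod
  cases u with
  | zero => omega
  | succ u =>
    refine hw' ⟨w + u * n, add_mul_mem hS hw u, ?_⟩
    rw [mul_add_one, mul_comm] at hu
    omega

lemma le_add_of_forall_add_ne {F w : ℕ} (hFmax : ∀ m, F < m → m ∈ S)
    (hw : ¬∃ s ∈ S, s + n = w) : w ≤ F + n := by
  by_contra h
  exact hw ⟨w - n, hFmax _ (by omega), by omega⟩

lemma forall_add_ne_add {F : ℕ} (hF : F ∉ S) : ¬∃ s ∈ S, s + n = F + n := by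
  rintro ⟨s, hs, h⟩
  exact hF (by rwa [show s = F by omega] at hs)

structure IsAperyEnum (S : Set ℕ) (n : ℕ) (ω : ℕ → ℕ) : Prop where
  lt : ∀ i j, i < j → j < n → ω i < ω j
  image_eq : ω '' Set.Iio n = {w ∈ S | ¬∃ s ∈ S, s + n = w}

namespace IsAperyEnum

variable {ω : ℕ → ℕ} (hω : IsAperyEnum S n ω)
include hω

lemma mem {i : ℕ} (hi : i < n) : ω i ∈ S ∧ ¬∃ s ∈ S, s + n = ω i := by
  have h : ω i ∈ ω '' Set.Iio n := ⟨i, hi, rfl⟩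
  rwa [hω.image_eq] at h

lemma apply_le_apply {i j : ℕ} (hij : i ≤ j) (hj : j < n) : ω i ≤ ω j := by
  rcases hij.lt_or_eq with h | rfl
  · exact (hω.lt i j h hj).le
  · rfl

lemma apply_sub_one {F : ℕ} (hn : 0 < n) (hF : F ∉ S) (hFmax : ∀ m, F < m → m ∈ S) :
    ω (n - 1) = F + n := by
  have hle : ∀ i < n, ω i ≤ F + n := fun i hi => le_add_of_forall_add_ne hFmax (hω.mem hi).2
  have htop : F + n ∈ ω '' Set.Iio n := by
    rw [hω.image_eq]
    exact ⟨hFmax _ (by omega), forall_add_ne_add hF⟩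
  obtain ⟨i, hi, hωi⟩ := htop
  have hi : i < n := hi
  rcases Nat.lt_or_ge i (n - 1) with h | h
  · have := hω.lt i (n - 1) h (by omega)
    have := hle (n - 1) (by omega)
    omega
  · rwa [show n - 1 = i by omega]

lemma injOn_mod (hS : ∀ x ∈ S, x + n ∈ S) : Set.InjOn (fun i => ω i % n) (Set.Iio n) := by
  intro i (hi : i < n) j (hj : j < n) hij
  rcases Nat.lt_trichotomy i j with h | h | h
  · exact absurd hij (mod_ne_of_lt_of_forall_add_ne hS (hω.mem hi).1 (hω.mem hj).2 (hω.lt i j h hj))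
  · exact h
  · exact absurd hij.symm
      (mod_ne_of_lt_of_forall_add_ne hS (hω.mem hj).1 (hω.mem hi).2 (hω.lt j i h hi))

end IsAperyEnum

lemma card_le_ncard_Icc_inter (hS : ∀ x ∈ S, x + n ∈ S) (hn : 0 < n) {ι : Type*} (s : Finset ι)
    (w : ι → ℕ) (hwS : ∀ i ∈ s, w i ∈ S) (hinj : Set.InjOn (fun i => w i % n) s) {k : ℕ}
    (hk : ∀ i ∈ s, w i / n ≤ k) :
    s.card ≤ (Set.Icc (k * n) ((k + 1) * n - 1) ∩ S).ncard := by
  rw [← Set.ncard_coe_finset]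
  refine Set.ncard_le_ncard_of_injOn (fun i => k * n + w i % n) ?_ ?_
    ((Set.finite_Icc _ _).inter_of_left _)
  · intro i hi
    have hmod := Nat.mod_lt (w i) hn
    obtain ⟨u, hu⟩ := Nat.exists_eq_add_of_le (hk i hi)
    refine ⟨⟨by omega, by rw [add_one_mul]; omega⟩, ?_⟩
    have hdiv := Nat.div_add_mod' (w i) n
    have : k * n + w i % n = w i + u * n := by rw [hu, add_mul]; omega
    exact this ▸ add_mul_mem hS (hwS i hi) u
  · intro i hi j hj hij
    exact hinj hi hj (by simpa using hij)

lemma ncard_Icc_inter_le {k x : ℕ} (hx : x ∈ Set.Icc (k * n) ((k + 1) * n - 1)) (hxS : x ∉ S) :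
    (Set.Icc (k * n) ((k + 1) * n - 1) ∩ S).ncard ≤ n - 1 := by
  calc (Set.Icc (k * n) ((k + 1) * n - 1) ∩ S).ncard
      ≤ (Set.Icc (k * n) ((k + 1) * n - 1) \ {x}).ncard :=
        Set.ncard_le_ncard (fun y ⟨hy, hyS⟩ => ⟨hy, fun h => hxS (h ▸ hyS)⟩)
          (Set.finite_Icc _ _).sdiff
    _ = (Set.Icc (k * n) ((k + 1) * n - 1)).ncard - 1 := Set.ncard_sdiff_singleton_of_mem hx
    _ ≤ n - 1 := by rw [Set.ncard_Icc_nat, add_one_mul]; omega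

lemma IsAperyEnum.succ_le_ncard_Icc_inter {ω : ℕ → ℕ} (hω : IsAperyEnum S n ω)
    (hS : ∀ x ∈ S, x + n ∈ S) (hn : 0 < n) {z k : ℕ} (hz : z < n) (hk : ω z / n ≤ k) :
    z + 1 ≤ (Set.Icc (k * n) ((k + 1) * n - 1) ∩ S).ncard := by
  simpa using card_le_ncard_Icc_inter hS hn (range (z + 1)) ω
    (fun i hi => (hω.mem (by simp at hi; omega)).1)
    (hω.injOn_mod hS |>.mono fun i hi => by simp at hi ⊢; omega)
    (fun i hi => (Nat.div_le_div_right
      (hω.apply_le_apply (by simpa [Nat.lt_succ_iff] using hi) hz)).trans hk)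

lemma ncard_Icc_inter_le_of_lt (hS : ∀ x ∈ S, x + n ∈ S) {F Q R k : ℕ} (hF : F ∉ S)
    (hQR : F + 1 = Q * n + R) (hR : 1 ≤ R) (hRn : R ≤ n) (hk : k < Q) :
    (Set.Icc (k * n) ((k + 1) * n - 1) ∩ S).ncard ≤ n - 1 := by
  refine ncard_Icc_inter_le (x := k * n + (R - 1)) ⟨by omega, by rw [add_one_mul]; omega⟩
    fun hx => hF ?_
  obtain ⟨u, rfl⟩ := Nat.exists_eq_add_of_lt hk
  have hsplit : (k + u + 1) * n = k * n + (u + 1) * n := by ring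
  simpa [show k * n + (R - 1) + (u + 1) * n = F by omega] using add_mul_mem hS hx (u + 1)

end Apery

lemma sub_le_sum_ncard_fiber (f : ℕ → ℕ) {m Q : ℕ} {J : Finset ℕ}
    (hf : ∀ k ∈ Ico m Q, f k ∈ J) :
    Q - m ≤ ∑ j ∈ J, {k | k < Q ∧ f k = j}.ncard := by
  rw [← Nat.card_Ico, card_eq_sum_card_fiberwise hf]
  refine sum_le_sum fun j _ => ?_
  calc #{k ∈ Ico m Q | f k = j} ≤ #{k ∈ range Q | f k = j} :=
        card_le_card fun k => by simp only [mem_filter, mem_Ico, mem_range]; omega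
    _ = {k | k < Q ∧ f k = j}.ncard := by
        rw [← Set.ncard_coe_finset]
        congr 1
        ext k
        simp

theorem stmt13
    (d : ℕ) (hd : 2 ≤ d)
    (a : Fin d → ℕ)
    (a1 : ℕ) (ha1 : a1 = a ⟨0, by omega⟩)
    (S : Set ℕ)
    (hS : S = {m : ℕ | ∃ c : Fin d → ℕ, m = ∑ i, c i * a i})
    (F : ℕ) (hF : F ∉ S) (hFmax : ∀ m : ℕ, F < m → m ∈ S)
    (ω : ℕ → ℕ)
    (hω_mono : ∀ i j : ℕ, i < j → j < a1 → ω i < ω j)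
    (hω_range : ω '' Set.Iio a1 = {w ∈ S | ¬ ∃ s ∈ S, s + a1 = w})
    (Q R : ℕ) (hQR : F + 1 = Q * a1 + R) (hR2 : 2 ≤ R) (hRa : R ≤ a1)
    (I : ℕ → Set ℕ) (hI : ∀ k, I k = Set.Icc (k * a1) ((k + 1) * a1 - 1))
    (ε : ℕ → ℕ) (hε : ∀ j, ε j = {k : ℕ | k < Q ∧ (I k ∩ S).ncard = j}.ncard)
    (z : ℕ) (hz : ⌈(a1 : ℚ) / (d : ℚ)⌉ ≤ (z : ℤ) + 1) (hza : z ≤ a1 - 2)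
    :
    (((z : ℤ) + 1) * (d : ℤ) - (a1 : ℤ)) *
        (((ω (a1 - 1) / a1 : ℕ) : ℤ) - ((ω z / a1 : ℕ) : ℤ) - 1)
      ≤ ∑ j ∈ Finset.Icc (z + 1) (a1 - 1), (ε j : ℤ) * ((j : ℤ) * (d : ℤ) - (a1 : ℤ)) := by
  have hn : 0 < a1 := by omega
  have hclosed : ∀ x ∈ S, x + a1 ∈ S := fun x hx => by
    subst hS ha1; exact add_apply_mem_setOf_sum_mul a _ hx
  have hω : IsAperyEnum S a1 ω := ⟨hω_mono, hω_range⟩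
  have htop : ω (a1 - 1) / a1 = Q + 1 := by
    rw [hω.apply_sub_one hn hF hFmax, show F + a1 = (R - 1) + (Q + 1) * a1 by rw [add_one_mul]; omega,
      Nat.add_mul_div_right _ _ hn, Nat.div_eq_of_lt (by omega), zero_add]
  have hblock : ∀ k ∈ Ico (ω z / a1) Q, (I k ∩ S).ncard ∈ Icc (z + 1) (a1 - 1) := by
    intro k hk
    rw [mem_Ico] at hk
    rw [mem_Icc, hI]
    exact ⟨hω.succ_le_ncard_Icc_inter hclosed hn (by omega) hk.1,
      ncard_Icc_inter_le_of_lt hclosed hF hQR (by omega) hRa hk.2⟩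
  have hcount := sub_le_sum_ncard_fiber (fun k => (I k ∩ S).ncard) hblock
  simp only [← hε] at hcount
  have hc : 0 ≤ ((z : ℤ) + 1) * d - a1 := by
    have h := Int.ceil_le.mp hz
    rw [div_le_iff₀ (by positivity)] at h
    exact sub_nonneg.mpr (by exact_mod_cast h)
  calc (((z : ℤ) + 1) * d - a1) * (((ω (a1 - 1) / a1 : ℕ) : ℤ) - ((ω z / a1 : ℕ) : ℤ) - 1)
      ≤ (((z : ℤ) + 1) * d - a1) * ∑ j ∈ Icc (z + 1) (a1 - 1), (ε j : ℤ) := by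
        refine mul_le_mul_of_nonneg_left ?_ hc
        have := (Nat.cast_le (α := ℤ)).2 hcount
        push_cast [htop] at this ⊢
        omega
    _ ≤ ∑ j ∈ Icc (z + 1) (a1 - 1), (ε j : ℤ) * ((j : ℤ) * d - a1) := by
        rw [mul_sum]
        refine sum_le_sum fun j hj => ?_
        have hj : (z : ℤ) + 1 ≤ j := by exact_mod_cast (mem_Icc.mp hj).1
        nlinarith [mul_nonneg (Int.natCast_nonneg (ε j))
          (mul_nonneg (sub_nonneg.2 hj) (Int.natCast_nonneg d))]
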